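/- (Theorem 2, core rank statement) Let F be a global function field of genus g > 0 over F_q, P₁, …, P_s distinct rational places, P_∞ a further place of degree μ, and D a positive divisor with deg D = 2g and supp(D) ∩ {P_∞, P₂, …, P_s} = ∅. Let β_j^{(i)} be chosen as in Lemma 3. Suppose ℓ ∈ ℕ with ℓμ > 2g, d₁, …, d_s ∈ ℕ₀ with 1 ≤ d₁ + ⋯ + d_s ≤ ℓμ − 2g, and b_j^{(i)} ∈ F_q are such that β := Σ_{i=1}^s Σ_{j=1}^{d_i} b_j^{(i)} β_j^{(i)} satisfies ν_{P_∞}(β) ≥ ℓ. Then all b_j^{(i)} = 0. -/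

import Mathlib

open scoped BigOperators

/-- An algebraic function field `F` of one variable over the full constant field `K`,
presented through the set of its places: each place `P` has a normalized discrete
valuation `v P` (its value on `0` is irrelevant/junk) and a degree `deg P ≥ 1`.
The axioms are the standard facts: multiplicativity and the ultrametric inequality of
valuations, triviality on constants, finiteness of the support of a principal divisor,
the degree formula `deg(div f) = 0`, the full-constant-field property, and the fact
that places of degree one have residue field `K`. -/
structure FFPlaces (K F : Type*) [Field K] [Field F] [Algebra K F] where
  Place : Type
  v : Place → F → ℤ
  deg : Place → ℕ
  deg_pos : ∀ P, 0 < deg P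
  v_mul : ∀ (P) (x y : F), x ≠ 0 → y ≠ 0 → v P (x * y) = v P x + v P y
  v_add : ∀ (P) (x y : F), x ≠ 0 → y ≠ 0 → x + y ≠ 0 → min (v P x) (v P y) ≤ v P (x + y)
  v_algebraMap : ∀ (P) (c : K), c ≠ 0 → v P (algebraMap K F c) = 0
  finite_support : ∀ f : F, f ≠ 0 → {P | v P f ≠ 0}.Finite
  degree_formula : ∀ f : F, f ≠ 0 → (∑ᶠ P, (deg P : ℤ) * v P f) = 0
  full_constants : ∀ f : F, f ≠ 0 → (∀ P, 0 ≤ v P f) → ∃ c : K, f = algebraMap K F c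
  residue_one : ∀ P, deg P = 1 → ∀ f g : F, f ≠ 0 → g ≠ 0 → v P f = v P g →
      ∃ c : K, f = algebraMap K F c * g ∨ v P f < v P (f - algebraMap K F c * g)

namespace FFPlaces

variable {K F : Type*} [Field K] [Field F] [Algebra K F]

/-- The degree of a divisor (a finitely supported `ℤ`-valued function on places). -/
def degD (FF : FFPlaces K F) (D : FF.Place →₀ ℤ) : ℤ :=
  ∑ P ∈ D.support, (FF.deg P : ℤ) * D P

/-- The Riemann–Roch space `L(D) = {f ∈ F* : div f + D ≥ 0} ∪ {0}` of a divisor `D`,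
as a `K`-subspace of `F`. -/
def RR (FF : FFPlaces K F) (D : FF.Place →₀ ℤ) : Submodule K F where
  carrier := {f | f = 0 ∨ ∀ P, -(D P) ≤ FF.v P f}
  zero_mem' := Or.inl rfl
  add_mem' := by
    intro a b ha hb
    simp only [Set.mem_setOf_eq] at *
    by_cases ha0 : a = 0
    · simpa [ha0] using hb
    by_cases hb0 : b = 0
    · simpa [hb0] using ha
    by_cases hab : a + b = 0
    · exact Or.inl hab
    have ha' := ha.resolve_left ha0
    have hb' := hb.resolve_left hb0
    exact Or.inr fun P =>
      le_trans (le_min (ha' P) (hb' P)) (FF.v_add P a b ha0 hb0 hab)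
  smul_mem' := by
    intro c x hx
    simp only [Set.mem_setOf_eq] at *
    by_cases hc : c = 0
    · left; simp [hc]
    by_cases hx0 : x = 0
    · left; simp [hx0]
    have hx' := hx.resolve_left hx0
    have halg : algebraMap K F c ≠ 0 :=
      (map_ne_zero_iff (algebraMap K F) (RingHom.injective _)).mpr hc
    refine Or.inr fun P => ?_
    rw [Algebra.smul_def, FF.v_mul P _ x halg hx0, FF.v_algebraMap P c hc]
    simpa using hx' P

end FFPlaces

/-!
Every `β_j^{(i)}` with `j ≤ d_i` lies in `L(E)`, `E = D + (d₁ - 1)P₁ + d₂P₂ + ⋯ + d_sP_s`, so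
`ν_{P_∞}(β) ≥ ℓ` puts `β` in `L(E - ℓP_∞)`, a space of negative degree: `β = 0`.
The conditions of Lemma 3 fix `ν_{P_i}(β_j^{(i)})`: it is `-j` for `i ≥ 2`, while all other
`β`'s have `ν_{P_i} ≥ 0`, and `ν_{P₁}(β_j^{(1)}) = -ν_{P₁}(D) - j + 1`. A nontrivial combination of
elements with distinct valuations has the valuation of its lowest term, so it cannot be cancelled
by terms of higher valuation; this kills the blocks `i ≥ 2` one at a time, and then block `1`.
-/

namespace FFPlaces

variable {K F : Type*} [Field K] [Field F] [Algebra K F] (FF : FFPlaces K F)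

lemma v_smul (Q : FF.Place) {c : K} {x : F} (hc : c ≠ 0) (hx : x ≠ 0) :
    FF.v Q (c • x) = FF.v Q x := by
  have hc' : algebraMap K F c ≠ 0 := (map_ne_zero_iff _ (algebraMap K F).injective).mpr hc
  rw [Algebra.smul_def, FF.v_mul Q _ x hc' hx, FF.v_algebraMap Q c hc, zero_add]

lemma v_neg (Q : FF.Place) {x : F} (hx : x ≠ 0) : FF.v Q (-x) = FF.v Q x := by
  rw [← neg_one_smul K x, FF.v_smul Q (neg_ne_zero.mpr one_ne_zero) hx]

/-- `{x | ν_Q(x) ≥ n}`, with `ν_Q(0) = ∞`. -/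
def valSubmodule (Q : FF.Place) (n : ℤ) : Submodule K F where
  carrier := {x | x = 0 ∨ n ≤ FF.v Q x}
  zero_mem' := Or.inl rfl
  add_mem' := by
    rintro x y (rfl | hx) (rfl | hy)
    · simp
    · simp [hy]
    · simp [hx]
    by_cases hx0 : x = 0
    · simp [hx0, hy]
    by_cases hy0 : y = 0
    · simp [hy0, hx]
    by_cases hxy : x + y = 0
    · exact Or.inl hxy
    exact Or.inr ((le_min hx hy).trans (FF.v_add Q x y hx0 hy0 hxy))
  smul_mem' := by
    rintro c x (rfl | hx)
    · simp
    by_cases hc : c = 0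
    · simp [hc]
    by_cases hx0 : x = 0
    · simp [hx0]
    exact Or.inr (by rwa [FF.v_smul Q hc hx0])

variable {FF}

lemma mem_valSubmodule {Q : FF.Place} {n : ℤ} {x : F} :
    x ∈ FF.valSubmodule Q n ↔ x = 0 ∨ n ≤ FF.v Q x := Iff.rfl

lemma valSubmodule_anti {Q : FF.Place} {m n : ℤ} (h : m ≤ n) :
    FF.valSubmodule Q n ≤ FF.valSubmodule Q m :=
  fun _ hx => hx.imp_right h.trans

lemma mem_RR_iff {A : FF.Place →₀ ℤ} {x : F} :
    x ∈ FF.RR A ↔ ∀ Q, x ∈ FF.valSubmodule Q (-A Q) := by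
  by_cases hx : x = 0
  · simp [hx]
  · exact or_iff_right hx |>.trans (forall_congr' fun _ => (or_iff_right hx).symm)

lemma RR_mono {A B : FF.Place →₀ ℤ} (h : A ≤ B) : FF.RR A ≤ FF.RR B := fun _ hx =>
  mem_RR_iff.mpr fun Q => valSubmodule_anti (neg_le_neg (h Q)) (mem_RR_iff.mp hx Q)

lemma ne_zero_and_v_eq_of_mem_RR_of_notMem {A : FF.Place →₀ ℤ} {Q : FF.Place} {x : F}
    (hx : x ∈ FF.RR A) (hx' : x ∉ FF.RR (A - Finsupp.single Q 1)) :
    x ≠ 0 ∧ FF.v Q x = -A Q := by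
  have hx0 : x ≠ 0 := by rintro rfl; exact hx' (Submodule.zero_mem _)
  rw [mem_RR_iff] at hx hx'
  push Not at hx'
  obtain ⟨Q', hQ'⟩ := hx'
  by_cases hQ : Q' = Q
  · subst hQ
    have hle := (hx Q').resolve_left hx0
    simp only [mem_valSubmodule, hx0, false_or, not_le, Finsupp.coe_sub, Pi.sub_apply,
      Finsupp.single_eq_same] at hQ'
    exact ⟨hx0, by omega⟩
  · simp [Ne.symm hQ, hx Q'] at hQ'

lemma ne_zero_and_v_eq_of_mem_RR_add_single_sub_single {D : FF.Place →₀ ℤ} {a b : FF.Place}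
    (hab : a ≠ b) {m n : ℤ} {x : F}
    (hx : x ∈ FF.RR (D + Finsupp.single a m - Finsupp.single b n))
    (hx' : x ∉ FF.RR (D + Finsupp.single a (m - 1) - Finsupp.single b n)) :
    x ≠ 0 ∧ FF.v a x = -(D a + m) := by
  have h := ne_zero_and_v_eq_of_mem_RR_of_notMem (Q := a) hx (by
    convert hx' using 3
    rw [Finsupp.single_sub]
    abel)
  simpa [hab] using h

lemma add_ne_zero_and_v_add_eq {Q : FF.Place} {x y : F} (hx : x ≠ 0)
    (hy : y ∈ FF.valSubmodule Q (FF.v Q x + 1)) : x + y ≠ 0 ∧ FF.v Q (x + y) = FF.v Q x := by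
  by_cases hy0 : y = 0
  · simp [hy0, hx]
  replace hy := hy.resolve_left hy0
  have hxy : x + y ≠ 0 := by
    intro h
    rw [eq_neg_of_add_eq_zero_right h, FF.v_neg Q hx] at hy
    omega
  have h₁ := FF.v_add Q x y hx hy0 hxy
  have h₂ := FF.v_add Q (x + y) (-y) hxy (neg_ne_zero.mpr hy0) (by simpa using hx)
  rw [add_neg_cancel_right, FF.v_neg Q hy0] at h₂
  exact ⟨hxy, by omega⟩

lemma exists_v_sum_smul_eq {ι : Type*} (Q : FF.Place) {t : Finset ι} {f : ι → F} {c : ι → K}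
    (hf : ∀ k ∈ t, f k ≠ 0) (hinj : Set.InjOn (fun k => FF.v Q (f k)) t)
    (hc : ∃ k ∈ t, c k ≠ 0) :
    ∃ k ∈ t, ∑ k ∈ t, c k • f k ≠ 0 ∧ FF.v Q (∑ k ∈ t, c k • f k) = FF.v Q (f k) := by
  classical
  obtain ⟨k₀, hk₀, hmin⟩ := (t.filter (c · ≠ 0)).exists_min_image (fun k => FF.v Q (f k))
    (by simpa [Finset.filter_nonempty_iff] using hc)
  rw [Finset.mem_filter] at hk₀
  have hterm : c k₀ • f k₀ ≠ 0 := smul_ne_zero hk₀.2 (hf k₀ hk₀.1)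
  have hrest : ∑ k ∈ t.erase k₀, c k • f k ∈ FF.valSubmodule Q (FF.v Q (c k₀ • f k₀) + 1) := by
    refine Submodule.sum_mem _ fun k hk => ?_
    obtain ⟨hne, hk⟩ := Finset.mem_erase.mp hk
    by_cases hck : c k = 0
    · simp [hck]
    have hle := hmin k (Finset.mem_filter.mpr ⟨hk, hck⟩)
    have hne' := hinj.ne hk hk₀.1 hne
    refine Or.inr ?_
    simp only [FF.v_smul Q hck (hf k hk), FF.v_smul Q hk₀.2 (hf k₀ hk₀.1)] at hle hne' ⊢
    omega
  rw [← Finset.add_sum_erase t _ hk₀.1]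
  obtain ⟨hne, hv⟩ := add_ne_zero_and_v_add_eq hterm hrest
  exact ⟨k₀, hk₀.1, hne, hv.trans (FF.v_smul Q hk₀.2 (hf k₀ hk₀.1))⟩

lemma coeff_eq_zero_of_sum_eq_zero {ι κ : Type*} (Q : FF.Place) {t : Finset ι}
    {T : ι → Finset κ} {f : ι → κ → F} {c : ι → κ → K}
    (hsum : ∑ i ∈ t, ∑ k ∈ T i, c i k • f i k = 0) {i₀ : ι} (hi₀ : i₀ ∈ t) {w : κ → ℤ}
    (hf : ∀ k ∈ T i₀, f i₀ k ≠ 0 ∧ FF.v Q (f i₀ k) = w k) (hw : Set.InjOn w (T i₀))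
    (hother : ∀ k ∈ T i₀, ∀ i ∈ t, i ≠ i₀ → ∀ k' ∈ T i,
      c i k' • f i k' ∈ FF.valSubmodule Q (w k + 1)) :
    ∀ k ∈ T i₀, c i₀ k = 0 := by
  classical
  by_contra! hc
  have hinj : Set.InjOn (fun k => FF.v Q (f i₀ k)) (T i₀) := fun k hk k' hk' h =>
    hw hk hk' (by simpa [(hf k hk).2, (hf k' hk').2] using h)
  obtain ⟨k, hk, hne, hv⟩ :=
    exists_v_sum_smul_eq (FF := FF) Q (fun k hk => (hf k hk).1) hinj hc
  rw [← Finset.add_sum_erase t _ hi₀] at hsum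
  refine (add_ne_zero_and_v_add_eq (Q := Q) hne ?_).1 hsum
  rw [hv, (hf k hk).2]
  exact Submodule.sum_mem _ fun i hi => Submodule.sum_mem _ fun k' hk' =>
    hother k hk i (Finset.mem_of_mem_erase hi) (Finset.ne_of_mem_erase hi) k' hk'

lemma degD_eq_linearCombination (A : FF.Place →₀ ℤ) :
    FF.degD A = Finsupp.linearCombination ℤ (fun Q => (FF.deg Q : ℤ)) A := by
  simp only [degD, Finsupp.linearCombination_apply, Finsupp.sum, smul_eq_mul, mul_comm]

lemma degD_nonneg_of_mem_RR {A : FF.Place →₀ ℤ} {x : F} (hx : x ∈ FF.RR A) (hx0 : x ≠ 0) :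
    0 ≤ FF.degD A := by
  have hfin : (Function.support fun Q => (FF.deg Q : ℤ) * FF.v Q x).Finite :=
    (FF.finite_support x hx0).subset fun Q hQ h0 => hQ (by simp [show FF.v Q x = 0 from h0])
  have hdeg : FF.degD A = ∑ᶠ Q, (FF.deg Q : ℤ) * A Q := by
    rw [finsum_eq_sum_of_support_subset _ (s := A.support) fun Q hQ => by
      simpa using right_ne_zero_of_mul hQ]
    rfl
  have hA : (Function.support fun Q => (FF.deg Q : ℤ) * A Q).Finite :=
    A.support.finite_toSet.subset fun Q hQ => by simpa using right_ne_zero_of_mul hQ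
  calc 0 ≤ ∑ᶠ Q, (FF.deg Q : ℤ) * (FF.v Q x + A Q) := finsum_nonneg fun Q =>
        mul_nonneg (Nat.cast_nonneg _) (by linarith [(mem_RR_iff.mp hx Q).resolve_left hx0])
    _ = (∑ᶠ Q, (FF.deg Q : ℤ) * FF.v Q x) + ∑ᶠ Q, (FF.deg Q : ℤ) * A Q := by
        simp_rw [mul_add]; exact finsum_add_distrib hfin hA
    _ = FF.degD A := by rw [FF.degree_formula x hx0, zero_add, hdeg]

/-- `L(A) ∩ {ν_Q ≥ n} ⊆ L(A - n Q)` when `Q ∉ supp A`, and the latter is zero in negative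
degree. -/
lemma eq_zero_of_mem_RR_of_mem_valSubmodule {A : FF.Place →₀ ℤ} {Q : FF.Place} {n : ℤ} {x : F}
    (hx : x ∈ FF.RR A) (hAQ : A Q = 0) (hxQ : x ∈ FF.valSubmodule Q n)
    (hdeg : FF.degD A < FF.deg Q * n) : x = 0 := by
  by_contra hx0
  have hmem : x ∈ FF.RR (A - Finsupp.single Q n) := mem_RR_iff.mpr fun Q' => by
    by_cases hQ : Q' = Q
    · subst hQ; simpa [hAQ] using hxQ
    · simpa [Finsupp.single_apply, Ne.symm hQ] using mem_RR_iff.mp hx Q'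
  have := degD_nonneg_of_mem_RR hmem hx0
  rw [degD_eq_linearCombination, map_sub, Finsupp.linearCombination_single,
    ← degD_eq_linearCombination, smul_eq_mul] at this
  linarith

open Finsupp in
/-- All `β_j^{(i)}`, `j ≤ d_i`, lie in `L(D + (d₁ - 1)P₁ + d₂P₂ + ⋯ + d_sP_s)` (here `P₁ = P 0`),
whose degree `deg D + ∑ dᵢ - 1` is below `ℓ deg P_∞`. -/
lemma sum_smul_eq_zero_of_mem_valSubmodule {s : ℕ} [NeZero s] {P : Fin s → FF.Place}
    (hPdeg : ∀ i, FF.deg (P i) = 1) {Pinf : FF.Place} (hPinf : ∀ i, Pinf ≠ P i)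
    {D : FF.Place →₀ ℤ} (hDPinf : D Pinf = 0) {β : Fin s → ℕ → F}
    (hβ0 : ∀ j : ℕ, 1 ≤ j →
      β 0 j ∈ FF.RR (D + single (P 0) ((j : ℤ) - 1) - single (P 1) ((j : ℤ) - 1)))
    (hβ : ∀ i ≠ 0, ∀ j : ℕ, 1 ≤ j →
      β i j ∈ FF.RR (D + single (P i) (j : ℤ) - single (P 0) (j : ℤ)))
    {d : Fin s → ℕ} {ℓ : ℕ} (hdeg : FF.degD D + ∑ i, (d i : ℤ) ≤ FF.deg Pinf * ℓ)
    (b : Fin s → ℕ → K)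
    (hval : ∑ i, ∑ j ∈ Finset.Icc 1 (d i), b i j • β i j ∈ FF.valSubmodule Pinf ℓ) :
    ∑ i, ∑ j ∈ Finset.Icc 1 (d i), b i j • β i j = 0 := by
  set E := D + ∑ i, single (P i) (d i : ℤ) - single (P 0) 1 with hE
  have hE_ge : ∀ i, D + single (P i) (d i : ℤ) - single (P 0) 1 ≤ E := fun i => by
    rw [hE]
    gcongr
    exact Finset.single_le_sum (f := fun i => single (P i) (d i : ℤ)) (fun i _ => by simp)
      (Finset.mem_univ i)
  have hmem : ∀ i, ∀ j ∈ Finset.Icc 1 (d i), β i j ∈ FF.RR E := by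
    intro i j hj
    obtain ⟨hj1, hj2⟩ := Finset.mem_Icc.mp hj
    rcases eq_or_ne i 0 with rfl | hi
    · refine RR_mono (le_trans ?_ (hE_ge 0)) (hβ0 j hj1)
      calc _ ≤ D + single (P 0) ((j : ℤ) - 1) := sub_le_self _ (single_nonneg.2 (by omega))
        _ ≤ D + single (P 0) ((d 0 : ℤ) - 1) := by gcongr
        _ = _ := by rw [single_sub, add_sub_assoc]
    · refine RR_mono (le_trans ?_ (hE_ge i)) (hβ i hi j hj1)
      gcongr; omega
  refine eq_zero_of_mem_RR_of_mem_valSubmodule (Q := Pinf) (n := ℓ)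
    (Submodule.sum_mem _ fun i _ => Submodule.sum_mem _ fun j hj =>
      Submodule.smul_mem _ _ (hmem i j hj)) ?_ hval ?_
  · simp [E, hPinf, hDPinf]
  · rw [hE, degD_eq_linearCombination, map_sub, map_add, map_sum, ← degD_eq_linearCombination]
    simp [hPdeg]
    omega

end FFPlaces

open Finsupp in
theorem theorem2_rank_general (Fq F : Type*) [Field Fq] [Field F] [Algebra Fq F]
    (FF : FFPlaces Fq F) (g : ℕ)
    (s : ℕ) [NeZero s] (hs2 : 2 ≤ s) (P : Fin s → FF.Place)
    (hP : Function.Injective P) (hPdeg : ∀ i, FF.deg (P i) = 1)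
    (μ : ℕ) (Pinf : FF.Place) (hPinfdeg : FF.deg Pinf = μ)
    (hPinfne : ∀ i, Pinf ≠ P i)
    (D : FF.Place →₀ ℤ) (hdegD : FF.degD D = 2 * g)
    (hDsupp : ∀ i : Fin s, i ≠ 0 → D (P i) = 0) (hDsuppInf : D Pinf = 0)
    (β : Fin s → ℕ → F)
    (hβ1 : ∀ j : ℕ, 1 ≤ j →
      β 0 j ∈ FF.RR (D + single (P 0) ((j : ℤ) - 1) - single (P 1) ((j : ℤ) - 1)) ∧
      β 0 j ∉ FF.RR (D + single (P 0) ((j : ℤ) - 2) - single (P 1) ((j : ℤ) - 1)))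
    (hβi : ∀ i : Fin s, i ≠ 0 → ∀ j : ℕ, 1 ≤ j →
      β i j ∈ FF.RR (D + single (P i) (j : ℤ) - single (P 0) (j : ℤ)) ∧
      β i j ∉ FF.RR (D + single (P i) (j : ℤ) - single (P 0) ((j : ℤ) + 1)) ∧
      β i j ∉ FF.RR (D + single (P i) ((j : ℤ) - 1) - single (P 0) (j : ℤ)))
    (ℓ : ℕ) (hℓ : 2 * g < ℓ * μ) (d : Fin s → ℕ)
    (hd2 : ∑ i, d i ≤ ℓ * μ - 2 * g)
    (b : Fin s → ℕ → Fq)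
    (hval : (∑ i, ∑ j ∈ Finset.Icc 1 (d i), b i j • β i j) = 0 ∨
      (ℓ : ℤ) ≤ FF.v Pinf (∑ i, ∑ j ∈ Finset.Icc 1 (d i), b i j • β i j)) :
    ∀ (i : Fin s) (j : ℕ), 1 ≤ j → j ≤ d i → b i j = 0 := by
  have h01 : (0 : Fin s) ≠ 1 := by simp [Fin.ext_iff, Nat.mod_eq_of_lt (show 1 < s by omega)]
  have hv0 : ∀ j, 1 ≤ j → β 0 j ≠ 0 ∧ FF.v (P 0) (β 0 j) = -(D (P 0) + (j - 1)) := fun j hj =>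
    FFPlaces.ne_zero_and_v_eq_of_mem_RR_add_single_sub_single (hP.ne h01) (hβ1 j hj).1
      (by convert (hβ1 j hj).2 using 6; ring)
  have hvi : ∀ i ≠ 0, ∀ j, 1 ≤ j → β i j ≠ 0 ∧ FF.v (P i) (β i j) = -j := fun i hi j hj => by
    simpa [hDsupp i hi] using FFPlaces.ne_zero_and_v_eq_of_mem_RR_add_single_sub_single
      (hP.ne hi) (hβi i hi j hj).1 (hβi i hi j hj).2.2
  have hsum := FFPlaces.sum_smul_eq_zero_of_mem_valSubmodule hPdeg hPinfne hDsuppInf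
    (fun j hj => (hβ1 j hj).1) (fun i hi j hj => (hβi i hi j hj).1) (by
      rw [hdegD, hPinfdeg, ← Nat.cast_sum]
      norm_cast
      rw [mul_comm μ]
      omega) b hval
  have hnonneg : ∀ i ≠ 0, ∀ i' ≠ i, ∀ j, 1 ≤ j → β i' j ∈ FF.valSubmodule (P i) 0 := by
    classical
    intro i hi i' hi' j hj
    rcases eq_or_ne i' 0 with rfl | hi'0
    · refine FFPlaces.valSubmodule_anti ?_ (FFPlaces.mem_RR_iff.mp (hβ1 j hj).1 (P i))
      simp [single_apply, hP.eq_iff, hDsupp i hi, hi.symm]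
      split_ifs <;> omega
    · refine FFPlaces.valSubmodule_anti ?_ (FFPlaces.mem_RR_iff.mp (hβi i' hi'0 j hj).1 (P i))
      simp [hP.eq_iff, hDsupp i hi, hi.symm, hi']
  have hblock : ∀ i ≠ 0, ∀ j ∈ Finset.Icc 1 (d i), b i j = 0 := fun i hi =>
    FFPlaces.coeff_eq_zero_of_sum_eq_zero (P i) hsum (Finset.mem_univ i)
      (fun j hj => hvi i hi j (Finset.mem_Icc.mp hj).1) (fun j _ j' _ h => by simpa using h)
      (fun j hj i' _ hi' j' hj' => FFPlaces.valSubmodule_anti (by linarith [Finset.mem_Icc.mp hj])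
        (Submodule.smul_mem _ _ (hnonneg i hi i' hi' j' (Finset.mem_Icc.mp hj').1)))
  have hblock0 : ∀ j ∈ Finset.Icc 1 (d 0), b 0 j = 0 :=
    FFPlaces.coeff_eq_zero_of_sum_eq_zero (P 0) hsum (Finset.mem_univ 0)
      (fun j hj => hv0 j (Finset.mem_Icc.mp hj).1) (fun j _ j' _ h => by simpa using h)
      (fun j _ i' _ hi' j' hj' => by simp [hblock i' hi' j' hj'])
  intro i j hj1 hj2
  rcases eq_or_ne i 0 with rfl | hi
  · exact hblock0 j (Finset.mem_Icc.mpr ⟨hj1, hj2⟩)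
  · exact hblock i hi j (Finset.mem_Icc.mpr ⟨hj1, hj2⟩)

open Finsupp in
/-- Theorem 2 of the paper (core rank statement). Let `F` be a global function field of
genus `g > 0` over `Fq` (Riemann–Roch recorded in `hRR`), `P 0, …, P (s-1)` distinct
rational places (the paper's `P₁, …, P_s`), `Pinf` a further place of degree `μ`, and `D`
a positive divisor of degree `2g` with support avoiding `Pinf, P₂, …, P_s`. Choose
`β_j^{(i)}` as in Lemma 3. If `ℓμ > 2g`, `1 ≤ d₁ + ⋯ + d_s ≤ ℓμ - 2g`, and
`β = ∑_{i=1}^s ∑_{j=1}^{d_i} b_j^{(i)} β_j^{(i)}` satisfies `ν_{Pinf}(β) ≥ ℓ`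
(with the convention `ν_{Pinf}(0) = ∞`), then all `b_j^{(i)} = 0`. -/
theorem theorem2_rank (Fq F : Type*) [Field Fq] [Fintype Fq] [Field F] [Algebra Fq F]
    (FF : FFPlaces Fq F) (g : ℕ) (hg : 0 < g)
    (hRR : ∀ D : FF.Place →₀ ℤ, 2 * (g : ℤ) - 1 ≤ FF.degD D →
      (Module.finrank Fq (FF.RR D) : ℤ) = FF.degD D + 1 - g)
    (s : ℕ) [NeZero s] (hs2 : 2 ≤ s) (P : Fin s → FF.Place)
    (hP : Function.Injective P) (hPdeg : ∀ i, FF.deg (P i) = 1)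
    (μ : ℕ) (hμ : 1 ≤ μ) (Pinf : FF.Place) (hPinfdeg : FF.deg Pinf = μ)
    (hPinfne : ∀ i, Pinf ≠ P i)
    (D : FF.Place →₀ ℤ) (hDpos : ∀ Q, 0 ≤ D Q) (hdegD : FF.degD D = 2 * g)
    (hDsupp : ∀ i : Fin s, i ≠ 0 → D (P i) = 0) (hDsuppInf : D Pinf = 0)
    (β : Fin s → ℕ → F)
    (hβ1 : ∀ j : ℕ, 1 ≤ j →
      β 0 j ∈ FF.RR (D + single (P 0) ((j : ℤ) - 1) - single (P 1) ((j : ℤ) - 1)) ∧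
      β 0 j ∉ FF.RR (D + single (P 0) ((j : ℤ) - 2) - single (P 1) ((j : ℤ) - 1)))
    (hβi : ∀ i : Fin s, i ≠ 0 → ∀ j : ℕ, 1 ≤ j →
      β i j ∈ FF.RR (D + single (P i) (j : ℤ) - single (P 0) (j : ℤ)) ∧
      β i j ∉ FF.RR (D + single (P i) (j : ℤ) - single (P 0) ((j : ℤ) + 1)) ∧
      β i j ∉ FF.RR (D + single (P i) ((j : ℤ) - 1) - single (P 0) (j : ℤ)))
    (ℓ : ℕ) (hℓ : 2 * g < ℓ * μ) (d : Fin s → ℕ)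
    (hd1 : 1 ≤ ∑ i, d i) (hd2 : ∑ i, d i ≤ ℓ * μ - 2 * g)
    (b : Fin s → ℕ → Fq)
    (hval : (∑ i, ∑ j ∈ Finset.Icc 1 (d i), b i j • β i j) = 0 ∨
      (ℓ : ℤ) ≤ FF.v Pinf (∑ i, ∑ j ∈ Finset.Icc 1 (d i), b i j • β i j)) :
    ∀ (i : Fin s) (j : ℕ), 1 ≤ j → j ≤ d i → b i j = 0 :=
  theorem2_rank_general Fq F FF g s hs2 P hP hPdeg μ Pinf hPinfdeg hPinfne D hdegD hDsupp hDsuppInf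
    β hβ1 hβi ℓ hℓ d hd2 b hval
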